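/- The double zeta value ζ(6,1) = ∑_{n>m≥1} 1/(n⁶ m) equals 3ζ(7) − ζ(2)ζ(5) − ζ(3)ζ(4). -/

import Mathlib

open scoped BigOperators

/-- Riemann zeta value at a positive integer `s`. -/
noncomputable def zetaV (s : ℕ) : ℝ := ∑' n : ℕ, 1 / (n + 1 : ℝ) ^ s

/-- Double zeta value `ζ(s₁, s₂) = ∑_{n > m ≥ 1} 1/(n^{s₁} m^{s₂})`. -/
noncomputable def dzeta (s₁ s₂ : ℕ) : ℝ :=
  ∑' p : {q : ℕ × ℕ // q.2 < q.1 ∧ 1 ≤ q.2},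
    1 / (((p : ℕ × ℕ).1 : ℝ) ^ s₁ * ((p : ℕ × ℕ).2 : ℝ) ^ s₂)

/-- The `n`-th harmonic number `H_n = ∑_{m=1}^n 1/m`. -/
noncomputable def harmonic1 (n : ℕ) : ℝ := ∑ m ∈ Finset.range n, 1 / (m + 1 : ℝ)

/-- The generalized harmonic number `H_{n,2} = ∑_{m=1}^n 1/m²`. -/
noncomputable def harmonic2 (n : ℕ) : ℝ := ∑ m ∈ Finset.range n, 1 / (m + 1 : ℝ) ^ 2

set_option maxHeartbeats 1000000

open Filter


lemma DZ.sumpow (s : ℕ) (hs : 2 ≤ s) : Summable (fun n : ℕ => 1 / ((n : ℝ) + 1) ^ s) := by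
  have h : Summable (fun n : ℕ => 1 / (n : ℝ) ^ s) :=
    Real.summable_one_div_nat_pow.mpr (by omega)
  refine ((summable_nat_add_iff 1).mpr h).congr fun n => ?_
  push_cast; ring

lemma DZ.summable_master :
    Summable (fun p : ℕ × ℕ => (1 / ((p.1 : ℝ) + 1) ^ 2) * (1 / ((p.2 : ℝ) + 1) ^ 2)) := by
  have := Summable.mul_of_nonneg (f := fun n : ℕ => 1 / ((n : ℝ) + 1) ^ 2)
    (g := fun n : ℕ => 1 / ((n : ℝ) + 1) ^ 2) (DZ.sumpow 2 le_rfl) (DZ.sumpow 2 le_rfl)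
    (fun n => by positivity) (fun n => by positivity)
  exact this

lemma DZ.summable_dom {F : ℕ × ℕ → ℝ} (h0 : ∀ p, 0 ≤ F p)
    (h : ∀ p : ℕ × ℕ, F p ≤ 1 / (((p.1 : ℝ) + 1) ^ 2 * ((p.2 : ℝ) + 1) ^ 2)) :
    Summable F := by
  refine Summable.of_nonneg_of_le h0 (fun p => ?_) DZ.summable_master
  refine (h p).trans_eq ?_
  rw [div_mul_div_comm, one_mul]

lemma DZ.one_div_mono {A B : ℝ} (hB : 0 < B) (h : B ≤ A) : 1 / A ≤ 1 / B :=
  one_div_le_one_div_of_le hB h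

lemma DZ.harmonic1_le (n : ℕ) : harmonic1 n ≤ n := by
  induction n with
  | zero => simp [harmonic1]
  | succ n ih =>
    rw [harmonic1, Finset.sum_range_succ, ← harmonic1]
    push_cast
    have : 1 / ((n : ℝ) + 1) ≤ 1 := by
      rw [div_le_one (by positivity)]; linarith [Nat.cast_nonneg (α := ℝ) n]
    linarith

lemma DZ.harmonic1_nonneg (n : ℕ) : 0 ≤ harmonic1 n :=
  Finset.sum_nonneg fun i _ => div_nonneg zero_le_one (by positivity)

lemma DZ.summable_D : Summable (fun n : ℕ => harmonic1 n / ((n : ℝ) + 1) ^ 6) := by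
  refine Summable.of_nonneg_of_le
    (fun n => div_nonneg (DZ.harmonic1_nonneg n) (by positivity)) (fun n => ?_)
    (DZ.sumpow 2 le_rfl)
  have h1 : harmonic1 n ≤ ((n : ℝ) + 1) ^ 4 := by
    refine (DZ.harmonic1_le n).trans ?_
    have ht : (1 : ℝ) ≤ (n : ℝ) + 1 := by linarith [Nat.cast_nonneg (α := ℝ) n]
    calc (n : ℝ) ≤ (n : ℝ) + 1 := by linarith
    _ ≤ ((n : ℝ) + 1) ^ 4 := le_self_pow₀ ht (by norm_num)
  rw [div_le_div_iff₀ (by positivity) (by positivity)]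
  calc harmonic1 n * ((n : ℝ) + 1) ^ 2 ≤ ((n : ℝ) + 1) ^ 4 * ((n : ℝ) + 1) ^ 2 := by
        have := DZ.harmonic1_nonneg n
        gcongr
  _ = 1 * ((n : ℝ) + 1) ^ 6 := by ring

lemma DZ.prod_zeta (s t : ℕ) (hs : 2 ≤ s) (ht : 2 ≤ t) :
    ∑' p : ℕ × ℕ, 1 / (((p.1 : ℝ) + 1) ^ s * ((p.2 : ℝ) + 1) ^ t) = zetaV s * zetaV t := by
  have hf := DZ.sumpow s hs
  have hg := DZ.sumpow t ht
  have hsum : Summable (fun p : ℕ × ℕ => (1 / ((p.1 : ℝ) + 1) ^ s) * (1 / ((p.2 : ℝ) + 1) ^ t)) := by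
    have := Summable.mul_of_nonneg (f := fun n : ℕ => 1 / ((n : ℝ) + 1) ^ s)
      (g := fun n : ℕ => 1 / ((n : ℝ) + 1) ^ t) hf hg
      (fun n => by positivity) (fun n => by positivity)
    exact this
  have key : ∑' p : ℕ × ℕ, (1 / ((p.1 : ℝ) + 1) ^ s) * (1 / ((p.2 : ℝ) + 1) ^ t)
      = zetaV s * zetaV t := by
    rw [Summable.tsum_prod' hsum (fun b => hsum.prod_factor b)]
    have : ∀ b : ℕ, ∑' c : ℕ, (1 / ((b : ℝ) + 1) ^ s) * (1 / ((c : ℝ) + 1) ^ t)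
        = (1 / ((b : ℝ) + 1) ^ s) * zetaV t := fun b => tsum_mul_left
    rw [tsum_congr this, tsum_mul_right]
    rfl
  rw [← key]
  exact tsum_congr fun p => by rw [div_mul_div_comm, one_mul]

lemma DZ.tele (j : ℕ) :
    HasSum (fun i : ℕ => 1 / (((i : ℝ) + 1) * ((i : ℝ) + (j : ℝ) + 2)))
      (harmonic1 (j + 1) / ((j : ℝ) + 1)) := by
  have hs : Summable (fun i : ℕ => 1 / (((i : ℝ) + 1) * ((i : ℝ) + (j : ℝ) + 2))) := by
    refine Summable.of_nonneg_of_le (fun i => by positivity) (fun i => ?_) (DZ.sumpow 2 le_rfl)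
    refine DZ.one_div_mono (by positivity) ?_
    have h0 : (0 : ℝ) ≤ (i : ℝ) := Nat.cast_nonneg i
    have h1 : (0 : ℝ) ≤ (j : ℝ) := Nat.cast_nonneg j
    nlinarith
  rw [hs.hasSum_iff_tendsto_nat]
  -- partial sums
  have hps : ∀ K : ℕ, ∑ i ∈ Finset.range K, 1 / (((i : ℝ) + 1) * ((i : ℝ) + (j : ℝ) + 2))
      = (1 / ((j : ℝ) + 1)) * (harmonic1 (j + 1) - (harmonic1 (K + (j + 1)) - harmonic1 K)) := by
    intro K
    have hterm : ∀ i : ℕ, 1 / (((i : ℝ) + 1) * ((i : ℝ) + (j : ℝ) + 2))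
        = (1 / ((j : ℝ) + 1)) * (1 / ((i : ℝ) + 1) - 1 / ((i : ℝ) + (j : ℝ) + 2)) := by
      intro i
      have h1 : ((i : ℝ) + 1) ≠ 0 := by positivity
      have h2 : ((i : ℝ) + (j : ℝ) + 2) ≠ 0 := by positivity
      have h3 : ((j : ℝ) + 1) ≠ 0 := by positivity
      field_simp
      ring
    rw [Finset.sum_congr rfl (fun i _ => hterm i), ← Finset.mul_sum]
    congr 1
    rw [Finset.sum_sub_distrib]
    have e1 : ∑ i ∈ Finset.range K, 1 / ((i : ℝ) + 1) = harmonic1 K := rfl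
    have e2 : harmonic1 (K + (j + 1)) = harmonic1 K
        + ∑ i ∈ Finset.range (j + 1), 1 / ((K : ℝ) + (i : ℝ) + 1) := by
      rw [harmonic1, Finset.sum_range_add, ← harmonic1]
      congr 1
      exact Finset.sum_congr rfl fun i _ => by push_cast; ring
    have e3 : ∑ i ∈ Finset.range K, 1 / ((i : ℝ) + (j : ℝ) + 2)
        = harmonic1 (j + 1 + K) - harmonic1 (j + 1) := by
      rw [harmonic1, Finset.sum_range_add, ← harmonic1, add_sub_cancel_left]
      exact Finset.sum_congr rfl fun i _ => by push_cast; ring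
    rw [e1, e3, show j + 1 + K = K + (j + 1) from by omega]
    ring
  refine Tendsto.congr (fun K => (hps K).symm) ?_
  have hnn : ∀ K : ℕ, 0 ≤ harmonic1 (K + (j + 1)) - harmonic1 K := by
    intro K
    rw [harmonic1, Finset.sum_range_add, ← harmonic1, add_sub_cancel_left]
    exact Finset.sum_nonneg fun i _ => by positivity
  have hub : ∀ K : ℕ, harmonic1 (K + (j + 1)) - harmonic1 K
      ≤ ((j : ℝ) + 1) * (1 / ((K : ℝ) + 1)) := by
    intro K
    rw [harmonic1, Finset.sum_range_add, ← harmonic1, add_sub_cancel_left]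
    have : ∀ i ∈ Finset.range (j + 1), 1 / ((↑(K + i) : ℝ) + 1) ≤ 1 / ((K : ℝ) + 1) := by
      intro i _
      refine DZ.one_div_mono (by positivity) ?_
      push_cast
      linarith [Nat.cast_nonneg (α := ℝ) i]
    calc ∑ i ∈ Finset.range (j + 1), 1 / ((↑(K + i) : ℝ) + 1)
        ≤ ∑ _i ∈ Finset.range (j + 1), 1 / ((K : ℝ) + 1) := Finset.sum_le_sum this
    _ = ((j : ℝ) + 1) * (1 / ((K : ℝ) + 1)) := by
        rw [Finset.sum_const, Finset.card_range]
        push_cast; ring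
  have hzero : Tendsto (fun K : ℕ => harmonic1 (K + (j + 1)) - harmonic1 K) atTop (nhds 0) := by
    refine squeeze_zero hnn hub ?_
    have := tendsto_one_div_add_atTop_nhds_zero_nat (𝕜 := ℝ)
    have h2 := this.const_mul ((j : ℝ) + 1)
    simpa using h2
  have := (tendsto_const_nhds (x := harmonic1 (j + 1)) (f := atTop (α := ℕ))).sub hzero
  have h3 := this.const_mul (1 / ((j : ℝ) + 1))
  simpa [one_div, inv_mul_eq_div] using h3

noncomputable def DZ.w (q : ℕ × ℕ) : ℝ :=
  1 / (((q.1 : ℝ) + (q.2 : ℝ) + 2) ^ 6 * ((q.2 : ℝ) + 1))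

lemma DZ.summable_w : Summable DZ.w := by
  refine DZ.summable_dom (fun p => by unfold DZ.w; positivity) (fun p => ?_)
  unfold DZ.w
  refine DZ.one_div_mono (by positivity) ?_
  set x := (p.1 : ℝ) with hx
  set y := (p.2 : ℝ) with hy
  have hx0 : 0 ≤ x := Nat.cast_nonneg _
  have hy0 : 0 ≤ y := Nat.cast_nonneg _
  calc (x + 1) ^ 2 * (y + 1) ^ 2 ≤ (x + y + 2) ^ 2 * (x + y + 2) ^ 2 := by
        gcongr <;> linarith
  _ = (x + y + 2) ^ 4 * 1 * 1 := by ring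
  _ ≤ (x + y + 2) ^ 4 * (x + y + 2) ^ 2 * (y + 1) := by
        have h1 : (1 : ℝ) ≤ (x + y + 2) ^ 2 := by nlinarith
        have h2 : (1 : ℝ) ≤ y + 1 := by linarith
        gcongr <;> positivity
  _ = (x + y + 2) ^ 6 * (y + 1) := by ring

lemma DZ.harmonic1_zero : harmonic1 0 = 0 := by simp [harmonic1]

lemma DZ.harmonic1_succ (n : ℕ) : harmonic1 (n + 1) = harmonic1 n + 1 / ((n : ℝ) + 1) := by
  rw [harmonic1, Finset.sum_range_succ, ← harmonic1]

lemma DZ.w_tsum : ∑' q : ℕ × ℕ, DZ.w q = ∑' n : ℕ, harmonic1 n / ((n : ℝ) + 1) ^ 6 := by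
  rw [← Finset.HasAntidiagonal.sigmaAntidiagonalEquivProd.tsum_eq DZ.w]
  have hsum : Summable (fun x : (Σ _n : ℕ, ↥(Finset.HasAntidiagonal.antidiagonal _n)) =>
      DZ.w (Finset.HasAntidiagonal.sigmaAntidiagonalEquivProd x)) :=
    Finset.HasAntidiagonal.sigmaAntidiagonalEquivProd.summable_iff.mpr DZ.summable_w
  rw [Summable.tsum_sigma' (fun n => (hasSum_fintype _).summable) hsum]
  have inner : ∀ n : ℕ, ∑' c : ↥(Finset.HasAntidiagonal.antidiagonal n),
      DZ.w (Finset.HasAntidiagonal.sigmaAntidiagonalEquivProd ⟨n, c⟩) = harmonic1 (n + 1) / ((n : ℝ) + 2) ^ 6 := by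
    intro n
    rw [tsum_fintype]
    have : ∑ c : ↥(Finset.HasAntidiagonal.antidiagonal n),
        DZ.w (Finset.HasAntidiagonal.sigmaAntidiagonalEquivProd ⟨n, c⟩)
        = ∑ p ∈ Finset.HasAntidiagonal.antidiagonal n, DZ.w p := by
      rw [← Finset.sum_attach (Finset.HasAntidiagonal.antidiagonal n) DZ.w]
      rfl
    rw [this, Finset.Nat.sum_antidiagonal_eq_sum_range_succ_mk]
    have hterm : ∀ k ∈ Finset.range (n + 1),
        DZ.w (k, n - k) = (1 / ((n : ℝ) + 2) ^ 6) * (1 / ((↑(n - k) : ℝ) + 1)) := by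
      intro k hk
      have hk' : k ≤ n := by
        simpa using Nat.lt_succ_iff.mp (Finset.mem_range.mp hk)
      unfold DZ.w
      rw [Nat.cast_sub hk']
      have : (k : ℝ) + ((n : ℝ) - (k : ℝ)) + 2 = (n : ℝ) + 2 := by ring
      rw [this, div_mul_div_comm, one_mul]
    rw [Finset.sum_congr rfl hterm, ← Finset.mul_sum]
    have refl : ∑ k ∈ Finset.range (n + 1), (1 / ((↑(n - k) : ℝ) + 1))
        = harmonic1 (n + 1) := by
      have := Finset.sum_range_reflect (fun j => 1 / ((j : ℝ) + 1)) (n + 1)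
      rw [harmonic1, ← this]
      exact Finset.sum_congr rfl fun k hk => by norm_num
    rw [refl]
    rw [div_mul_eq_mul_div, one_mul]
  rw [tsum_congr inner]
  rw [Summable.tsum_eq_zero_add DZ.summable_D, DZ.harmonic1_zero]
  simp only [Nat.cast_zero, zero_div, zero_add]
  exact tsum_congr fun n => by push_cast; ring_nf

noncomputable def DZ.u (q : ℕ × ℕ) : ℝ :=
  (1 / ((q.1 : ℝ) + 1) ^ 5) * (1 / (((q.2 : ℝ) + 1) * ((q.2 : ℝ) + (q.1 : ℝ) + 2)))

noncomputable def DZ.v (q : ℕ × ℕ) : ℝ :=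
  1 / (((q.1 : ℝ) + 1) * (((q.2 : ℝ) + 1) * ((q.1 : ℝ) + (q.2 : ℝ) + 2) ^ 5))

lemma DZ.summable_u : Summable DZ.u := by
  refine DZ.summable_dom (fun p => by unfold DZ.u; positivity) (fun p => ?_)
  unfold DZ.u
  rw [div_mul_div_comm, one_mul]
  refine DZ.one_div_mono (by positivity) ?_
  set x := (p.1 : ℝ); set y := (p.2 : ℝ)
  have hx0 : 0 ≤ x := Nat.cast_nonneg _
  have hy0 : 0 ≤ y := Nat.cast_nonneg _
  calc (x + 1) ^ 2 * (y + 1) ^ 2 = (x + 1) ^ 2 * 1 * ((y + 1) * (y + 1)) := by ring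
  _ ≤ (x + 1) ^ 2 * (x + 1) ^ 3 * ((y + 1) * (y + x + 2)) := by
      have h1 : (1 : ℝ) ≤ (x + 1) ^ 3 := one_le_pow₀ (by linarith)
      gcongr <;> linarith
  _ = (x + 1) ^ 5 * ((y + 1) * (y + x + 2)) := by ring

lemma DZ.summable_v : Summable DZ.v := by
  refine DZ.summable_dom (fun p => by unfold DZ.v; positivity) (fun p => ?_)
  unfold DZ.v
  refine DZ.one_div_mono (by positivity) ?_
  set x := (p.1 : ℝ); set y := (p.2 : ℝ)
  have hx0 : 0 ≤ x := Nat.cast_nonneg _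
  have hy0 : 0 ≤ y := Nat.cast_nonneg _
  calc (x + 1) ^ 2 * (y + 1) ^ 2 = (x + 1) * ((y + 1) * ((x + 1) * (y + 1) * 1 * 1 * 1)) := by
        ring
  _ ≤ (x + 1) * ((y + 1) * ((x + y + 2) * (x + y + 2) * (x + y + 2) * (x + y + 2) * (x + y + 2))) := by
      gcongr <;> linarith
  _ = (x + 1) * ((y + 1) * (x + y + 2) ^ 5) := by ring

lemma DZ.u_tsum : ∑' q : ℕ × ℕ, DZ.u q
    = (∑' n : ℕ, harmonic1 n / ((n : ℝ) + 1) ^ 6) + zetaV 7 := by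
  rw [Summable.tsum_prod' DZ.summable_u (fun b => DZ.summable_u.prod_factor b)]
  have inner : ∀ j : ℕ, ∑' i : ℕ, DZ.u (j, i)
      = harmonic1 j / ((j : ℝ) + 1) ^ 6 + 1 / ((j : ℝ) + 1) ^ 7 := by
    intro j
    unfold DZ.u
    simp only
    rw [tsum_mul_left, (DZ.tele j).tsum_eq, DZ.harmonic1_succ]
    have hj : ((j : ℝ) + 1) ≠ 0 := by positivity
    field_simp
  rw [tsum_congr inner]
  rw [Summable.tsum_add DZ.summable_D (DZ.sumpow 7 (by norm_num))]
  rfl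

lemma DZ.v_tsum : ∑' q : ℕ × ℕ, DZ.v q = 2 * ∑' q : ℕ × ℕ, DZ.w q := by
  have hswap : Summable (fun q : ℕ × ℕ => DZ.w (q.2, q.1)) := by
    have := (Equiv.prodComm ℕ ℕ).summable_iff.mpr DZ.summable_w
    exact this
  have hterm : ∀ q : ℕ × ℕ, DZ.v q = DZ.w q + DZ.w (q.2, q.1) := by
    intro q
    unfold DZ.v DZ.w
    simp only
    have h1 : ((q.1 : ℝ) + 1) ≠ 0 := by positivity
    have h2 : ((q.2 : ℝ) + 1) ≠ 0 := by positivity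
    have h3 : ((q.1 : ℝ) + (q.2 : ℝ) + 2) ≠ 0 := by positivity
    have h4 : ((q.2 : ℝ) + (q.1 : ℝ) + 2) ≠ 0 := by positivity
    field_simp
    ring
  rw [tsum_congr hterm, Summable.tsum_add DZ.summable_w hswap]
  have : ∑' q : ℕ × ℕ, DZ.w (q.2, q.1) = ∑' q : ℕ × ℕ, DZ.w q := by
    have := (Equiv.prodComm ℕ ℕ).tsum_eq DZ.w
    exact this
  rw [this]; ring

def DZ.ez : ℕ × ℕ ≃ {q : ℕ × ℕ // q.2 < q.1 ∧ 1 ≤ q.2} where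
  toFun p := ⟨(p.1 + p.2 + 2, p.2 + 1), by omega, by omega⟩
  invFun q := (q.1.1 - q.1.2 - 1, q.1.2 - 1)
  left_inv p := by
    obtain ⟨a, b⟩ := p
    simp only [Prod.mk.injEq]
    omega
  right_inv q := by
    obtain ⟨⟨a, b⟩, h1, h2⟩ := q
    apply Subtype.ext
    simp only [Prod.mk.injEq]
    omega

lemma DZ.dzeta_eq : dzeta 6 1 = ∑' q : ℕ × ℕ, DZ.w q := by
  rw [dzeta, ← DZ.ez.tsum_eq]
  refine tsum_congr fun p => ?_
  show 1 / ((↑(p.1 + p.2 + 2) : ℝ) ^ 6 * (↑(p.2 + 1) : ℝ) ^ 1) = DZ.w p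
  unfold DZ.w
  push_cast
  ring

noncomputable def DZ.FP (p : ℕ × ℕ) : ℝ :=
  1 / (((p.1 : ℝ) + 1) ^ 2 * ((p.2 : ℝ) + 1) ^ 5) + 1 / (((p.1 : ℝ) + 1) ^ 3 * ((p.2 : ℝ) + 1) ^ 4)
  + 1 / (((p.1 : ℝ) + 1) ^ 4 * ((p.2 : ℝ) + 1) ^ 3)
  + 1 / (((p.1 : ℝ) + 1) ^ 5 * ((p.2 : ℝ) + 1) ^ 2)

lemma DZ.summable_pq (s t : ℕ) (hs : 2 ≤ s) (ht : 2 ≤ t) :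
    Summable (fun p : ℕ × ℕ => 1 / (((p.1 : ℝ) + 1) ^ s * ((p.2 : ℝ) + 1) ^ t)) := by
  refine DZ.summable_dom (fun p => by positivity) (fun p => ?_)
  refine DZ.one_div_mono (by positivity) ?_
  have hx : (1 : ℝ) ≤ (p.1 : ℝ) + 1 := by
    have := Nat.cast_nonneg (α := ℝ) p.1; linarith
  have hy : (1 : ℝ) ≤ (p.2 : ℝ) + 1 := by
    have := Nat.cast_nonneg (α := ℝ) p.2; linarith
  exact mul_le_mul (pow_le_pow_right₀ hx hs) (pow_le_pow_right₀ hy ht)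
    (by positivity) (by positivity)

lemma DZ.summable_FP : Summable DZ.FP := by
  unfold DZ.FP
  exact (((DZ.summable_pq 2 5 (by norm_num) (by norm_num)).add
    (DZ.summable_pq 3 4 (by norm_num) (by norm_num))).add
    (DZ.summable_pq 4 3 (by norm_num) (by norm_num))).add
    (DZ.summable_pq 5 2 (by norm_num) (by norm_num))

lemma DZ.FP_tsum : ∑' p : ℕ × ℕ, DZ.FP p
    = zetaV 2 * zetaV 5 + zetaV 3 * zetaV 4 + zetaV 4 * zetaV 3 + zetaV 5 * zetaV 2 := by
  unfold DZ.FP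
  rw [Summable.tsum_add (((DZ.summable_pq 2 5 (by norm_num) (by norm_num)).add
      (DZ.summable_pq 3 4 (by norm_num) (by norm_num))).add
      (DZ.summable_pq 4 3 (by norm_num) (by norm_num)))
      (DZ.summable_pq 5 2 (by norm_num) (by norm_num)),
    Summable.tsum_add ((DZ.summable_pq 2 5 (by norm_num) (by norm_num)).add
      (DZ.summable_pq 3 4 (by norm_num) (by norm_num)))
      (DZ.summable_pq 4 3 (by norm_num) (by norm_num)),
    Summable.tsum_add (DZ.summable_pq 2 5 (by norm_num) (by norm_num))
      (DZ.summable_pq 3 4 (by norm_num) (by norm_num))]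
  rw [DZ.prod_zeta 2 5 (by norm_num) (by norm_num), DZ.prod_zeta 3 4 (by norm_num) (by norm_num),
    DZ.prod_zeta 4 3 (by norm_num) (by norm_num), DZ.prod_zeta 5 2 (by norm_num) (by norm_num)]

def DZ.sUp : Set (ℕ × ℕ) := {p | p.2 < p.1}

def DZ.eUp : ℕ × ℕ ≃ ↥DZ.sUp where
  toFun q := ⟨(q.2 + q.1 + 1, q.1), by simp only [DZ.sUp, Set.mem_setOf_eq]; omega⟩
  invFun x := (x.1.2, x.1.1 - x.1.2 - 1)
  left_inv q := by
    obtain ⟨a, b⟩ := q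
    dsimp only
    simp only [Prod.mk.injEq, true_and, and_true]
    omega
  right_inv x := by
    obtain ⟨⟨a, b⟩, h⟩ := x
    simp only [DZ.sUp, Set.mem_setOf_eq] at h
    apply Subtype.ext
    dsimp only
    simp only [Prod.mk.injEq, true_and, and_true]
    omega

def DZ.eLe : ℕ × ℕ ≃ ↥DZ.sUpᶜ where
  toFun q := ⟨(q.1, q.1 + q.2), by simp only [DZ.sUp, Set.mem_compl_iff, Set.mem_setOf_eq]; omega⟩
  invFun x := (x.1.1, x.1.2 - x.1.1)
  left_inv q := by
    obtain ⟨a, b⟩ := q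
    dsimp only
    simp only [Prod.mk.injEq, true_and, and_true]
    omega
  right_inv x := by
    obtain ⟨⟨a, b⟩, h⟩ := x
    simp only [DZ.sUp, Set.mem_compl_iff, Set.mem_setOf_eq] at h
    apply Subtype.ext
    dsimp only
    simp only [Prod.mk.injEq, true_and, and_true]
    omega

lemma DZ.partition :
    ∑' p : ℕ × ℕ, DZ.FP p
      = (∑' q : ℕ × ℕ, DZ.FP (q.2 + q.1 + 1, q.1))
        + ((∑' n : ℕ, DZ.FP (n, n)) + ∑' q : ℕ × ℕ, DZ.FP (q.1, q.1 + q.2 + 1)) := by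
  have hsub1 : Summable ((DZ.FP ∘ Subtype.val) : ↥DZ.sUp → ℝ) := DZ.summable_FP.subtype _
  have hsub2 : Summable ((DZ.FP ∘ Subtype.val) : ↥(DZ.sUpᶜ) → ℝ) := DZ.summable_FP.subtype _
  rw [← Summable.tsum_add_tsum_compl (s := DZ.sUp) hsub1 hsub2]
  congr 1
  · rw [← DZ.eUp.tsum_eq (fun x : ↥DZ.sUp => DZ.FP ↑x)]
    exact tsum_congr fun q => rfl
  · rw [← DZ.eLe.tsum_eq (fun x : ↥(DZ.sUpᶜ) => DZ.FP ↑x)]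
    have hG : Summable (fun q : ℕ × ℕ => DZ.FP (q.1, q.1 + q.2)) := by
      have := DZ.eLe.summable_iff.mpr hsub2
      exact this
    have step1 : ∑' q : ℕ × ℕ, DZ.FP ↑(DZ.eLe q) = ∑' q : ℕ × ℕ, DZ.FP (q.1, q.1 + q.2) :=
      tsum_congr fun q => rfl
    rw [step1, Summable.tsum_prod' hG (fun b => hG.prod_factor b)]
    have hG' : Summable (fun q : ℕ × ℕ => DZ.FP (q.1, q.1 + q.2 + 1)) := by
      have hinj : Function.Injective (fun q : ℕ × ℕ => (q.1, q.2 + 1)) := by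
        intro a b h
        simp only [Prod.mk.injEq] at h
        exact Prod.ext h.1 (by omega)
      have hcomp := hG.comp_injective hinj
      refine hcomp.congr fun q => ?_
      simp only [Function.comp_apply]
      exact congrArg DZ.FP (Prod.ext rfl (Nat.add_assoc q.1 q.2 1).symm)
    have inner : ∀ j : ℕ, ∑' i : ℕ, DZ.FP (j, j + i)
        = DZ.FP (j, j) + ∑' i : ℕ, DZ.FP (j, j + i + 1) := by
      intro j
      exact Summable.tsum_eq_zero_add (hG.prod_factor j)
    rw [tsum_congr inner]
    have hdiag : Summable (fun n : ℕ => DZ.FP (n, n)) := by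
      have hinj : Function.Injective (fun n : ℕ => (n, n)) := by
        intro a b h; simpa using (Prod.mk.injEq _ _ _ _ ▸ h :)
      exact DZ.summable_FP.comp_injective hinj
    have houter : Summable (fun j : ℕ => ∑' i : ℕ, DZ.FP (j, j + i + 1)) := by
      have hfib : ∀ j : ℕ, HasSum (fun i : ℕ => DZ.FP (j, j + i + 1))
          (∑' i : ℕ, DZ.FP (j, j + i + 1)) := fun j => (hG'.prod_factor j).hasSum
      exact (HasSum.prod_fiberwise hG'.hasSum hfib).summable
    rw [Summable.tsum_add hdiag houter]
    congr 1
    rw [← Summable.tsum_prod' hG' (fun b => hG'.prod_factor b)]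

lemma DZ.upper_term (q : ℕ × ℕ) : DZ.FP (q.2 + q.1 + 1, q.1) = DZ.u q - DZ.v q := by
  unfold DZ.FP DZ.u DZ.v
  simp only
  push_cast
  have h1 : ((q.1 : ℝ) + 1) ≠ 0 := by positivity
  have h2 : ((q.2 : ℝ) + 1) ≠ 0 := by positivity
  have h3 : ((q.1 : ℝ) + (q.2 : ℝ) + 2) ≠ 0 := by positivity
  have h4 : ((q.2 : ℝ) + (q.1 : ℝ) + 2) ≠ 0 := by positivity
  field_simp
  ring

lemma DZ.low_term (q : ℕ × ℕ) : DZ.FP (q.1, q.1 + q.2 + 1) = DZ.FP (q.2 + q.1 + 1, q.1) := by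
  unfold DZ.FP
  push_cast
  ring

lemma DZ.diag_term (n : ℕ) : DZ.FP (n, n) = 4 * (1 / ((n : ℝ) + 1) ^ 7) := by
  unfold DZ.FP
  simp only
  have h : ((n : ℝ) + 1) ≠ 0 := by positivity
  field_simp
  ring

theorem stmt4 : dzeta 6 1 = 3 * zetaV 7 - zetaV 2 * zetaV 5 - zetaV 3 * zetaV 4 := by
  set D := ∑' n : ℕ, harmonic1 n / ((n : ℝ) + 1) ^ 6 with hD
  have hdz : dzeta 6 1 = D := by rw [DZ.dzeta_eq, DZ.w_tsum]
  have hu : ∑' q : ℕ × ℕ, DZ.u q = D + zetaV 7 := DZ.u_tsum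
  have hv : ∑' q : ℕ × ℕ, DZ.v q = 2 * D := by rw [DZ.v_tsum, DZ.w_tsum]
  have hUp : ∑' q : ℕ × ℕ, DZ.FP (q.2 + q.1 + 1, q.1) = D + zetaV 7 - 2 * D := by
    rw [tsum_congr DZ.upper_term, Summable.tsum_sub DZ.summable_u DZ.summable_v, hu, hv]
  have hLow : ∑' q : ℕ × ℕ, DZ.FP (q.1, q.1 + q.2 + 1) = D + zetaV 7 - 2 * D := by
    rw [tsum_congr DZ.low_term]; exact hUp
  have hdiag : ∑' n : ℕ, DZ.FP (n, n) = 4 * zetaV 7 := by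
    rw [tsum_congr DZ.diag_term, tsum_mul_left]
    rfl
  have hmain := DZ.partition
  rw [DZ.FP_tsum, hUp, hLow, hdiag] at hmain
  have hcomm : zetaV 4 * zetaV 3 = zetaV 3 * zetaV 4 := mul_comm _ _
  rw [hdz]
  linarith
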